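/- arXiv:math/0212209 — 7 statements merged into one kernel-verified Lean document; each statement's English description precedes it below -/
import Mathlib

section
/- For any polynomials L, M in C[T] of degree at most 1, one has (1/γ) H(L) H(M) ≤ H(L·M) ≤ 2 H(L) H(M), where γ = (1+√5)/2 is the golden ratio. -/
open Polynomial

/-- Height of a complex polynomial of degree at most 2:
the maximum of the absolute values of its coefficients. -/
noncomputable def H2 (P : Polynomial ℂ) : ℝ :=
  max ‖P.coeff 0‖ (max ‖P.coeff 1‖ ‖P.coeff 2‖)

/-- The golden ratio. -/
noncomputable def gr : ℝ := (1 + Real.sqrt 5) / 2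

open Real
open scoped goldenRatio

/-
Write L = a + bT and M = c + dT, so that L·M = ac + (ad + bc)T + bdT², and let h = H(L·M).
The upper bound is the triangle inequality. For the lower bound, |ac| and |bd| are at most h,
while x = |ad| and y = |bc| satisfy xy = |ac|·|bd| ≤ h² and |x - y| ≤ h. Hence
x(x - h) ≤ xy ≤ h², i.e. x is at most the positive root γh of t² - ht - h², and likewise y.
-/

lemma gr_eq_goldenRatio : gr = φ := rfl

lemma le_goldenRatio_mul_of_mul_sub_le {x h : ℝ} (hh : 0 ≤ h) (hx : x * (x - h) ≤ h ^ 2) :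
    x ≤ φ * h := by
  by_contra! hlt
  have hfac : (x - φ * h) * (x - ψ * h) = x * (x - h) - h ^ 2 := by
    linear_combination (-(h * x)) * goldenRatio_add_goldenConj + h ^ 2 * goldenRatio_mul_goldenConj
  have hψh : ψ * h ≤ 0 := mul_nonpos_of_nonpos_of_nonneg goldenConj_neg.le hh
  have hφh : 0 ≤ φ * h := mul_nonneg goldenRatio_pos.le hh
  nlinarith [mul_pos (sub_pos.2 hlt) (show 0 < x - ψ * h by linarith)]

lemma le_goldenRatio_mul_of_mul_le_sq {x y h : ℝ} (hh : 0 ≤ h) (hx : 0 ≤ x)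
    (hxy : x * y ≤ h ^ 2) (hsub : x ≤ h + y) : x ≤ φ * h :=
  le_goldenRatio_mul_of_mul_sub_le hh <|
    (mul_le_mul_of_nonneg_left (by linarith) hx).trans hxy

section NormedDivisionRing

variable {𝕜 : Type*} [NormedDivisionRing 𝕜] (a b c d : 𝕜)

lemma max_norm_mul_max_norm_le_goldenRatio_mul :
    max ‖a‖ ‖b‖ * max ‖c‖ ‖d‖ ≤ φ * max ‖a * c‖ (max ‖a * d + b * c‖ ‖b * d‖) := by
  set h := max ‖a * c‖ (max ‖a * d + b * c‖ ‖b * d‖)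
  have hac : ‖a‖ * ‖c‖ ≤ h := (norm_mul a c).symm.trans_le (le_max_left _ _)
  have hbd : ‖b‖ * ‖d‖ ≤ h :=
    (norm_mul b d).symm.trans_le ((le_max_right _ _).trans (le_max_right _ _))
  have hmid : ‖a * d + b * c‖ ≤ h := (le_max_left _ _).trans (le_max_right _ _)
  have hh : 0 ≤ h := (mul_nonneg (norm_nonneg a) (norm_nonneg c)).trans hac
  have hprod : (‖a‖ * ‖d‖) * (‖b‖ * ‖c‖) ≤ h ^ 2 :=
    calc (‖a‖ * ‖d‖) * (‖b‖ * ‖c‖) = (‖a‖ * ‖c‖) * (‖b‖ * ‖d‖) := by ring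
      _ ≤ h * h := mul_le_mul hac hbd (by positivity) hh
      _ = h ^ 2 := (sq h).symm
  have had : ‖a‖ * ‖d‖ ≤ h + ‖b‖ * ‖c‖ := by
    rw [← norm_mul, ← norm_mul]
    calc ‖a * d‖ = ‖(a * d + b * c) - b * c‖ := by rw [add_sub_cancel_right]
      _ ≤ ‖a * d + b * c‖ + ‖b * c‖ := norm_sub_le _ _
      _ ≤ h + ‖b * c‖ := by gcongr
  have hbc : ‖b‖ * ‖c‖ ≤ h + ‖a‖ * ‖d‖ := by
    rw [← norm_mul, ← norm_mul]
    calc ‖b * c‖ = ‖(a * d + b * c) - a * d‖ := by rw [add_sub_cancel_left]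
      _ ≤ ‖a * d + b * c‖ + ‖a * d‖ := norm_sub_le _ _
      _ ≤ h + ‖a * d‖ := by gcongr
  have hφh : h ≤ φ * h := le_mul_of_one_le_left hh one_lt_goldenRatio.le
  rw [max_mul_of_nonneg _ _ (by positivity), mul_max_of_nonneg _ _ (norm_nonneg a),
    mul_max_of_nonneg _ _ (norm_nonneg b)]
  refine max_le (max_le (hac.trans hφh) ?_) (max_le ?_ (hbd.trans hφh))
  · exact le_goldenRatio_mul_of_mul_le_sq hh (by positivity) hprod had
  · exact le_goldenRatio_mul_of_mul_le_sq hh (by positivity) (by linarith) hbc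

lemma max_norm_mul_le_two_mul_max_norm_mul_max_norm :
    max ‖a * c‖ (max ‖a * d + b * c‖ ‖b * d‖) ≤ 2 * max ‖a‖ ‖b‖ * max ‖c‖ ‖d‖ := by
  have hmax_nonneg : 0 ≤ max ‖a‖ ‖b‖ * max ‖c‖ ‖d‖ := by positivity
  have hAC : ‖a‖ * ‖c‖ ≤ max ‖a‖ ‖b‖ * max ‖c‖ ‖d‖ := by gcongr <;> simp
  have hAD : ‖a‖ * ‖d‖ ≤ max ‖a‖ ‖b‖ * max ‖c‖ ‖d‖ := by gcongr <;> simp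
  have hBC : ‖b‖ * ‖c‖ ≤ max ‖a‖ ‖b‖ * max ‖c‖ ‖d‖ := by gcongr <;> simp
  have hBD : ‖b‖ * ‖d‖ ≤ max ‖a‖ ‖b‖ * max ‖c‖ ‖d‖ := by gcongr <;> simp
  have hsum : ‖a * d + b * c‖ ≤ ‖a‖ * ‖d‖ + ‖b‖ * ‖c‖ :=
    (norm_add_le _ _).trans_eq (by rw [norm_mul, norm_mul])
  refine max_le ?_ (max_le ?_ ?_)
  · rw [norm_mul]; linarith
  · linarith
  · rw [norm_mul]; linarith

end NormedDivisionRing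

lemma H2_of_degree_le_one {P : ℂ[X]} (hP : P.degree ≤ 1) :
    H2 P = max ‖P.coeff 0‖ ‖P.coeff 1‖ := by
  have hP2 : P.coeff 2 = 0 := coeff_eq_zero_of_degree_lt (hP.trans_lt (by decide))
  rw [H2, hP2, norm_zero, max_eq_left (norm_nonneg _)]

lemma H2_mul_of_degree_le_one {L M : ℂ[X]} (hL : L.degree ≤ 1) (hM : M.degree ≤ 1) :
    H2 (L * M) = max ‖L.coeff 0 * M.coeff 0‖
      (max ‖L.coeff 0 * M.coeff 1 + L.coeff 1 * M.coeff 0‖ ‖L.coeff 1 * M.coeff 1‖) := by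
  obtain ⟨a, b, rfl⟩ : ∃ a b, L = C b * X + C a := ⟨_, _, eq_X_add_C_of_degree_le_one hL⟩
  obtain ⟨c, d, rfl⟩ : ∃ c d, M = C d * X + C c := ⟨_, _, eq_X_add_C_of_degree_le_one hM⟩
  have hprod : (C b * X + C a) * (C d * X + C c)
      = C (b * d) * X ^ 2 + C (a * d + b * c) * X + C (a * c) := by
    simp only [map_add, map_mul]; ring
  simp [H2, hprod, coeff_X, coeff_C, -map_mul]

theorem gelfond_degree_one (L M : Polynomial ℂ)
    (hL : L.degree ≤ 1) (hM : M.degree ≤ 1) :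
    (1 / gr) * H2 L * H2 M ≤ H2 (L * M) ∧ H2 (L * M) ≤ 2 * H2 L * H2 M := by
  rw [H2_mul_of_degree_le_one hL hM, H2_of_degree_le_one hL, H2_of_degree_le_one hM,
    gr_eq_goldenRatio, mul_assoc, one_div_mul_eq_div, div_le_iff₀ goldenRatio_pos, mul_comm _ φ]
  exact ⟨max_norm_mul_max_norm_le_goldenRatio_mul _ _ _ _,
    max_norm_mul_le_two_mul_max_norm_mul_max_norm _ _ _ _⟩
end

section
/- Let P, Q be nonzero polynomials in Z[T] with deg(P) ≤ 1 and deg(Q) ≤ 1. Then for any complex number ξ, |Res(P,Q)| ≤ H(P) H(Q) ( |P(ξ)|/H(P) + |Q(ξ)|/H(Q) ), i.e., |Res(P,Q)| ≤ H(Q)|P(ξ)| + H(P)|Q(ξ)|. -/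
/-! Eliminating `ξ` between the two linear forms gives the identity
`Res(P, Q) = P₁ Q(ξ) - Q₁ P(ξ)` for the leading coefficients `P₁, Q₁`; the bound follows by the
triangle inequality and `|P₁| ≤ H(P)`, `|Q₁| ≤ H(Q)`. -/

open Polynomial

/-- Height of an integer polynomial of degree at most 1, as a real number. -/
noncomputable def HZ1 (P : Polynomial ℤ) : ℝ :=
  max |(P.coeff 0 : ℝ)| |(P.coeff 1 : ℝ)|

/-- The resultant of two polynomials of degree at most 1,
computed as the Sylvester determinant with respect to degrees 1 and 1. -/
def res11 (P Q : Polynomial ℤ) : ℤ :=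
  P.coeff 1 * Q.coeff 0 - P.coeff 0 * Q.coeff 1

theorem Polynomial.aeval_of_degree_le_one {R A : Type*} [CommSemiring R] [Semiring A]
    [Algebra R A] {P : R[X]} (hP : P.degree ≤ 1) (x : A) :
    aeval x P = algebraMap R A (P.coeff 1) * x + algebraMap R A (P.coeff 0) := by
  conv_lhs => rw [eq_X_add_C_of_degree_le_one hP]
  simp [Algebra.commutes]

theorem res11_eq_sub_aeval {A : Type*} [CommRing A] {P Q : ℤ[X]} (hP : P.degree ≤ 1)
    (hQ : Q.degree ≤ 1) (x : A) :
    (res11 P Q : A) = P.coeff 1 * aeval x Q - Q.coeff 1 * aeval x P := by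
  rw [aeval_of_degree_le_one hP, aeval_of_degree_le_one hQ, res11]
  simp only [algebraMap_int_eq, eq_intCast, Int.cast_sub, Int.cast_mul]
  ring

theorem abs_coeff_one_le_HZ1 (P : ℤ[X]) : |(P.coeff 1 : ℝ)| ≤ HZ1 P :=
  le_max_right _ _

theorem resultant_bound_deg_one_one_general (P Q : Polynomial ℤ)
    (hP : P.degree ≤ 1) (hQ : Q.degree ≤ 1) (ξ : ℂ) :
    |(res11 P Q : ℝ)| ≤
      HZ1 Q * ‖aeval ξ P‖ + HZ1 P * ‖aeval ξ Q‖ := by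
  calc |(res11 P Q : ℝ)|
      = ‖(P.coeff 1 : ℂ) * aeval ξ Q - (Q.coeff 1 : ℂ) * aeval ξ P‖ := by
        rw [← res11_eq_sub_aeval hP hQ, Complex.norm_intCast]
    _ ≤ |(P.coeff 1 : ℝ)| * ‖aeval ξ Q‖ + |(Q.coeff 1 : ℝ)| * ‖aeval ξ P‖ := by
        simpa only [norm_mul, Complex.norm_intCast] using
          norm_sub_le ((P.coeff 1 : ℂ) * aeval ξ Q) ((Q.coeff 1 : ℂ) * aeval ξ P)
    _ ≤ HZ1 P * ‖aeval ξ Q‖ + HZ1 Q * ‖aeval ξ P‖ := by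
        gcongr <;> exact abs_coeff_one_le_HZ1 _
    _ = HZ1 Q * ‖aeval ξ P‖ + HZ1 P * ‖aeval ξ Q‖ := add_comm _ _

theorem resultant_bound_deg_one_one (P Q : Polynomial ℤ)
    (hP0 : P ≠ 0) (hQ0 : Q ≠ 0) (hP : P.degree ≤ 1) (hQ : Q.degree ≤ 1) (ξ : ℂ) :
    |(res11 P Q : ℝ)| ≤
      HZ1 Q * ‖aeval ξ P‖ + HZ1 P * ‖aeval ξ Q‖ :=
  resultant_bound_deg_one_one_general P Q hP hQ ξ
end

section
/- Let P, Q be nonzero polynomials in Z[T] with deg(P) ≤ 2 and deg(Q) ≤ 2. Then for any complex number ξ, |Res(P,Q)| ≤ H(P)² H(Q)² ( 6 |P(ξ)|/H(P) + 6 |Q(ξ)|/H(Q) ). -/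
/-!
By Cramer's rule applied to the Sylvester matrix, `Res(P, Q) = P U + Q V` for linear polynomials
`U`, `V` whose coefficients are cubic in those of `P` and `Q`, and `V` is `U` with `P` and `Q`
exchanged. For `|ξ| ≤ 1` the triangle inequality bounds `|U(ξ)|` by `6 H(P) H(Q)²` and `|V(ξ)|`
by `6 H(P)² H(Q)`. For `|ξ| > 1`, reversing the coefficients of both polynomials leaves the
resultant unchanged, and evaluating the reversed polynomials at `1/ξ` divides the values by `ξ²`,
so the first case applies.
-/

open Polynomial

/-- Height of an integer polynomial of degree at most 2, as a real number. -/
noncomputable def HZ2 (P : Polynomial ℤ) : ℝ :=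
  max |(P.coeff 0 : ℝ)| (max |(P.coeff 1 : ℝ)| |(P.coeff 2 : ℝ)|)

/-- The resultant of two polynomials of degree at most 2,
computed as the Sylvester determinant with respect to degree bounds 2 and 2. -/
def res22 (P Q : Polynomial ℤ) : ℤ :=
  Matrix.det !![P.coeff 2, P.coeff 1, P.coeff 0, 0;
                0, P.coeff 2, P.coeff 1, P.coeff 0;
                Q.coeff 2, Q.coeff 1, Q.coeff 0, 0;
                0, Q.coeff 2, Q.coeff 1, Q.coeff 0]

section
variable {R : Type*} [CommRing R]

def sylvesterDet22 (a b : Fin 3 → R) : R :=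
  Matrix.det !![a 2, a 1, a 0, 0; 0, a 2, a 1, a 0; b 2, b 1, b 0, 0; 0, b 2, b 1, b 0]

def quadEval (a : Fin 3 → R) (z : R) : R := a 0 + a 1 * z + a 2 * z ^ 2

/-- The coefficients are the last row of the adjugate of the Sylvester matrix. -/
def bezoutFactor (a b : Fin 3 → R) (z : R) : R :=
  z * (b 2 * (a 2 * b 1 - a 1 * b 2)) +
    (a 2 * b 1 ^ 2 - a 2 * b 0 * b 2 - a 1 * b 1 * b 2 + a 0 * b 2 ^ 2)

theorem sylvesterDet22_eq (a b : Fin 3 → R) :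
    sylvesterDet22 a b =
      (a 0 * b 2 - a 2 * b 0) ^ 2 - (a 0 * b 1 - a 1 * b 0) * (a 1 * b 2 - a 2 * b 1) := by
  simp [sylvesterDet22, Matrix.det_succ_row_zero, Fin.sum_univ_succ, Fin.succAbove]
  ring

theorem sylvesterDet22_eq_bezout (a b : Fin 3 → R) (z : R) :
    sylvesterDet22 a b = quadEval a z * bezoutFactor a b z + quadEval b z * bezoutFactor b a z := by
  rw [sylvesterDet22_eq, quadEval, quadEval, bezoutFactor, bezoutFactor]
  ring

theorem sylvesterDet22_rev (a b : Fin 3 → R) :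
    sylvesterDet22 (a ∘ Fin.rev) (b ∘ Fin.rev) = sylvesterDet22 a b := by
  simp only [sylvesterDet22_eq, Function.comp_apply, Fin.rev_zero, Fin.reduceLast, Fin.reduceRev]
  ring

theorem map_sylvesterDet22 {S : Type*} [CommRing S] (f : R →+* S) (a b : Fin 3 → R) :
    f (sylvesterDet22 a b) = sylvesterDet22 (f ∘ a) (f ∘ b) := by
  rw [sylvesterDet22, f.map_det]
  congr 1
  ext i j
  fin_cases i <;> fin_cases j <;> simp

theorem quadEval_rev_inv {F : Type*} [Field F] (a : Fin 3 → F) {z : F} (hz : z ≠ 0) :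
    quadEval (a ∘ Fin.rev) z⁻¹ = quadEval a z / z ^ 2 := by
  simp only [quadEval, Function.comp_apply, Fin.rev_zero, Fin.reduceLast, Fin.reduceRev, inv_pow]
  field_simp
  ring

end

section
variable {𝕜 : Type*} [NormedField 𝕜]

theorem norm_bezoutFactor_le {a b : Fin 3 → 𝕜} {H K : ℝ} (ha : ∀ i, ‖a i‖ ≤ H)
    (hb : ∀ i, ‖b i‖ ≤ K) {z : 𝕜} (hz : ‖z‖ ≤ 1) : ‖bezoutFactor a b z‖ ≤ 6 * H * K ^ 2 := by
  calc ‖bezoutFactor a b z‖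
      ≤ 1 * (K * (H * K + H * K)) + (H * (K * K) + H * K * K + H * K * K + H * (K * K)) := by
        unfold bezoutFactor
        simp only [sq]
        apply_rules [norm_add_le_of_le, norm_sub_le_of_le, norm_mul_le_of_le]
    _ = 6 * H * K ^ 2 := by ring

theorem norm_sylvesterDet22_le_of_norm_le_one {a b : Fin 3 → 𝕜} {H K : ℝ}
    (ha : ∀ i, ‖a i‖ ≤ H) (hb : ∀ i, ‖b i‖ ≤ K) {z : 𝕜} (hz : ‖z‖ ≤ 1) :
    ‖sylvesterDet22 a b‖ ≤ 6 * H * K ^ 2 * ‖quadEval a z‖ + 6 * H ^ 2 * K * ‖quadEval b z‖ := by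
  rw [sylvesterDet22_eq_bezout a b z]
  calc ‖quadEval a z * bezoutFactor a b z + quadEval b z * bezoutFactor b a z‖
      ≤ ‖quadEval a z‖ * ‖bezoutFactor a b z‖ + ‖quadEval b z‖ * ‖bezoutFactor b a z‖ :=
        (norm_add_le _ _).trans_eq (by rw [norm_mul, norm_mul])
    _ ≤ ‖quadEval a z‖ * (6 * H * K ^ 2) + ‖quadEval b z‖ * (6 * K * H ^ 2) := by
        gcongr
        exacts [norm_bezoutFactor_le ha hb hz, norm_bezoutFactor_le hb ha hz]
    _ = 6 * H * K ^ 2 * ‖quadEval a z‖ + 6 * H ^ 2 * K * ‖quadEval b z‖ := by ring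

theorem norm_sylvesterDet22_le {a b : Fin 3 → 𝕜} {H K : ℝ}
    (ha : ∀ i, ‖a i‖ ≤ H) (hb : ∀ i, ‖b i‖ ≤ K) (z : 𝕜) :
    ‖sylvesterDet22 a b‖ ≤ 6 * H * K ^ 2 * ‖quadEval a z‖ + 6 * H ^ 2 * K * ‖quadEval b z‖ := by
  rcases le_or_gt ‖z‖ 1 with hz | hz
  · exact norm_sylvesterDet22_le_of_norm_le_one ha hb hz
  have hz0 : z ≠ 0 := norm_pos_iff.mp (one_pos.trans hz)
  have hrev (c : Fin 3 → 𝕜) : ‖quadEval (c ∘ Fin.rev) z⁻¹‖ ≤ ‖quadEval c z‖ := by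
    rw [quadEval_rev_inv c hz0, norm_div, norm_pow]
    exact div_le_self (norm_nonneg _) (one_le_pow₀ hz.le)
  have hH : 0 ≤ H := (norm_nonneg _).trans (ha 0)
  have hK : 0 ≤ K := (norm_nonneg _).trans (hb 0)
  calc ‖sylvesterDet22 a b‖ = ‖sylvesterDet22 (a ∘ Fin.rev) (b ∘ Fin.rev)‖ := by
        rw [sylvesterDet22_rev]
    _ ≤ 6 * H * K ^ 2 * ‖quadEval (a ∘ Fin.rev) z⁻¹‖
          + 6 * H ^ 2 * K * ‖quadEval (b ∘ Fin.rev) z⁻¹‖ :=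
        norm_sylvesterDet22_le_of_norm_le_one (fun _ ↦ ha _) (fun _ ↦ hb _)
          (by rw [norm_inv]; exact inv_le_one_of_one_le₀ hz.le)
    _ ≤ 6 * H * K ^ 2 * ‖quadEval a z‖ + 6 * H ^ 2 * K * ‖quadEval b z‖ := by
        gcongr
        exacts [hrev a, hrev b]

end

theorem norm_coeff_le_HZ2 (P : Polynomial ℤ) (i : Fin 3) : ‖(P.coeff i : ℂ)‖ ≤ HZ2 P := by
  rw [Complex.norm_intCast]
  fin_cases i <;> simp [HZ2]

theorem aeval_eq_quadEval {P : Polynomial ℤ} (hP : P.degree ≤ 2) (ξ : ℂ) :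
    aeval ξ P = quadEval (fun i ↦ (P.coeff i : ℂ)) ξ := by
  rw [aeval_eq_sum_range' (Nat.lt_succ_of_le (natDegree_le_iff_degree_le.mpr hP))]
  simp [Finset.sum_range_succ, quadEval, zsmul_eq_mul]

theorem res22_eq_sylvesterDet22 (P Q : Polynomial ℤ) :
    res22 P Q = sylvesterDet22 (fun i ↦ P.coeff i) (fun i ↦ Q.coeff i) :=
  rfl

theorem resultant_bound_deg_two_two_general (P Q : Polynomial ℤ)
    (hP : P.degree ≤ 2) (hQ : Q.degree ≤ 2) (ξ : ℂ) :
    |(res22 P Q : ℝ)| ≤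
      HZ2 P ^ 2 * HZ2 Q ^ 2 *
        (6 * ‖aeval ξ P‖ / HZ2 P + 6 * ‖aeval ξ Q‖ / HZ2 Q) := by
  have key := norm_sylvesterDet22_le (norm_coeff_le_HZ2 P) (norm_coeff_le_HZ2 Q) ξ
  rw [← aeval_eq_quadEval hP, ← aeval_eq_quadEval hQ] at key
  have hres : ((res22 P Q : ℤ) : ℂ) =
      sylvesterDet22 (fun i ↦ (P.coeff i : ℂ)) (fun i ↦ (Q.coeff i : ℂ)) := by
    rw [res22_eq_sylvesterDet22]
    exact map_sylvesterDet22 (Int.castRingHom ℂ) _ _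
  -- also at `x = 0`, since `c / 0 = 0`
  have hdiv (x c : ℝ) : x ^ 2 * (c / x) = c * x := by
    rw [show x ^ 2 * (c / x) = c * (x * x / x) by ring, mul_self_div_self]
  rw [← Complex.norm_intCast, hres]
  convert key using 1
  rw [mul_add, mul_right_comm, hdiv, mul_assoc (HZ2 P ^ 2), hdiv]
  ring

theorem resultant_bound_deg_two_two (P Q : Polynomial ℤ)
    (hP0 : P ≠ 0) (hQ0 : Q ≠ 0) (hP : P.degree ≤ 2) (hQ : Q.degree ≤ 2) (ξ : ℂ) :
    |(res22 P Q : ℝ)| ≤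
      HZ2 P ^ 2 * HZ2 Q ^ 2 *
        (6 * ‖aeval ξ P‖ / HZ2 P + 6 * ‖aeval ξ Q‖ / HZ2 Q) :=
  resultant_bound_deg_two_two_general P Q hP hQ ξ
end

section
/- Let ξ ∈ C and let P, Q, R ∈ C[T] be polynomials of degree at most 2. Let D be the determinant of the 3×3 matrix whose rows are the coefficient vectors of P, Q, R (in the basis 1, T, T²). Then |D| ≤ 2 ( |P(ξ)| H(Q) H(R) + H(P) |Q(ξ)| H(R) + H(P) H(Q) |R(ξ)| ). -/
open Polynomial

/-!
Adding `ξ` times the second column and `ξ²` times the third to the first turns the first column of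
the coefficient matrix into `(P(ξ), Q(ξ), R(ξ))`. Expanding along that column, each cofactor is a
`2 × 2` minor `q i * r j - q j * r i`, of norm at most `2 H(Q) H(R)`.
-/

lemma norm_coeff_le_H2 (P : Polynomial ℂ) {i : ℕ} (hi : i ≤ 2) : ‖P.coeff i‖ ≤ H2 P := by
  interval_cases i
  · exact le_max_left _ _
  · exact (le_max_left _ _).trans (le_max_right _ _)
  · exact (le_max_right _ _).trans (le_max_right _ _)

lemma norm_mul_sub_mul_le {α : Type*} [SeminormedRing α] {a b c d : α} {M N : ℝ}
    (ha : ‖a‖ ≤ M) (hb : ‖b‖ ≤ M) (hc : ‖c‖ ≤ N) (hd : ‖d‖ ≤ N) :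
    ‖a * d - b * c‖ ≤ 2 * (M * N) := by
  have hM : 0 ≤ M := (norm_nonneg a).trans ha
  calc ‖a * d - b * c‖ ≤ ‖a‖ * ‖d‖ + ‖b‖ * ‖c‖ :=
        (norm_sub_le _ _).trans (add_le_add (norm_mul_le _ _) (norm_mul_le _ _))
    _ ≤ M * N + M * N := by gcongr
    _ = 2 * (M * N) := by ring

lemma norm_minor_le (Q R : Polynomial ℂ) {i j : ℕ} (hi : i ≤ 2) (hj : j ≤ 2) :
    ‖Q.coeff i * R.coeff j - Q.coeff j * R.coeff i‖ ≤ 2 * (H2 Q * H2 R) :=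
  norm_mul_sub_mul_le (norm_coeff_le_H2 Q hi) (norm_coeff_le_H2 Q hj)
    (norm_coeff_le_H2 R hi) (norm_coeff_le_H2 R hj)

lemma eval_eq_of_degree_le_two {K : Type*} [Semiring K] {P : K[X]} (hP : P.degree ≤ 2) (ξ : K) :
    P.eval ξ = P.coeff 0 + P.coeff 1 * ξ + P.coeff 2 * ξ ^ 2 := by
  rw [eval_eq_sum_range' (Nat.lt_succ_of_le (natDegree_le_iff_degree_le.2 hP))]
  simp [Finset.sum_range_succ]

lemma det_coeff_eq_eval_mul_minor {K : Type*} [CommRing K] {P Q R : K[X]}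
    (hP : P.degree ≤ 2) (hQ : Q.degree ≤ 2) (hR : R.degree ≤ 2) (ξ : K) :
    Matrix.det !![P.coeff 0, P.coeff 1, P.coeff 2;
                  Q.coeff 0, Q.coeff 1, Q.coeff 2;
                  R.coeff 0, R.coeff 1, R.coeff 2] =
      P.eval ξ * (Q.coeff 1 * R.coeff 2 - Q.coeff 2 * R.coeff 1)
      - Q.eval ξ * (P.coeff 1 * R.coeff 2 - P.coeff 2 * R.coeff 1)
      + R.eval ξ * (P.coeff 1 * Q.coeff 2 - P.coeff 2 * Q.coeff 1) := by
  rw [Matrix.det_fin_three, eval_eq_of_degree_le_two hP, eval_eq_of_degree_le_two hQ,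
    eval_eq_of_degree_le_two hR]
  simp only [Matrix.of_apply, Matrix.cons_val', Matrix.cons_val_zero, Matrix.cons_val_one,
    Matrix.cons_val_two, Matrix.empty_val', Matrix.cons_val_fin_one, Matrix.head_cons,
    Matrix.head_fin_const, Matrix.tail_cons]
  ring

theorem det_three_polys_bound (ξ : ℂ) (P Q R : Polynomial ℂ)
    (hP : P.degree ≤ 2) (hQ : Q.degree ≤ 2) (hR : R.degree ≤ 2) :
    ‖Matrix.det !![P.coeff 0, P.coeff 1, P.coeff 2;
                               Q.coeff 0, Q.coeff 1, Q.coeff 2;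
                               R.coeff 0, R.coeff 1, R.coeff 2]‖ ≤
      2 * (‖P.eval ξ‖ * H2 Q * H2 R
         + H2 P * ‖Q.eval ξ‖ * H2 R
         + H2 P * H2 Q * ‖R.eval ξ‖) := by
  rw [det_coeff_eq_eval_mul_minor hP hQ hR ξ]
  calc _ ≤ ‖P.eval ξ‖ * ‖Q.coeff 1 * R.coeff 2 - Q.coeff 2 * R.coeff 1‖
        + ‖Q.eval ξ‖ * ‖P.coeff 1 * R.coeff 2 - P.coeff 2 * R.coeff 1‖
        + ‖R.eval ξ‖ * ‖P.coeff 1 * Q.coeff 2 - P.coeff 2 * Q.coeff 1‖ := by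
        simp only [← norm_mul]
        exact (norm_add_le _ _).trans (add_le_add_left (norm_sub_le _ _) _)
    _ ≤ ‖P.eval ξ‖ * (2 * (H2 Q * H2 R)) + ‖Q.eval ξ‖ * (2 * (H2 P * H2 R))
        + ‖R.eval ξ‖ * (2 * (H2 P * H2 Q)) := by
        gcongr <;> exact norm_minor_le _ _ (by norm_num) (by norm_num)
    _ = _ := by ring
end

section
/- Let ξ ∈ C with [Q(ξ):Q] > 2, and let (X_i) and (P_i) be sequences as in the minimal-polynomial construction (H(P_i) = X_i strictly increasing, |P_{i+1}(ξ)| < |P_i(ξ)|, |P_i(ξ)| minimal among nonzero integer polynomials of degree ≤ 2 and height < X_{i+1}, P_i and P_{i+1} linearly independent over Q). If lim_{i→∞} X_{i+1} |P_i(ξ)| = 0, then there exist infinitely many indices i ≥ 2 such that P_{i-1}, P_i, P_{i+1} are linearly independent over Q. -/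
/-!
If the triples were dependent from some index `N` on, every `Pᵢ` with `i ≥ N` would lie in the
rational plane spanned by `P_N` and `P_{N+1}`. Eliminating a coefficient `k` between consecutive
members, `Eᵢ = P_{i+1,k} Pᵢ - P_{i,k} P_{i+1}`, then gives integer polynomials that are all nonzero
rational multiples `tᵢ E_N` of one fixed polynomial, and integrality bounds `|tᵢ|` from below.
Hence `|Eᵢ(ξ)| ≥ c |E_N(ξ)| > 0`, while `|Eᵢ(ξ)| ≤ X_{i+1} |Pᵢ(ξ)| + X_{i+2} |P_{i+1}(ξ)| → 0`.
-/

open Polynomial Filter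

def htZ (P : Polynomial ℤ) : ℤ :=
  max |P.coeff 0| (max |P.coeff 1| |P.coeff 2|)

section ContractWedge

variable {R M : Type*} [CommRing R] [AddCommGroup M] [Module R M]

/-- Up to sign, the contraction of `φ` with `u ∧ v`: the combination of `u` and `v` killed by `φ`.
It only depends on `u ∧ v`, which is what makes it rigid along a chain of coplanar vectors. -/
def contractWedge (φ : M →ₗ[R] R) (u v : M) : M := φ v • u - φ u • v

theorem smul_contractWedge_eq_of_add_add_eq_zero (φ : M →ₗ[R] R) {a b c : R} {u v w : M}
    (h : a • u + b • v + c • w = 0) :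
    c • contractWedge φ v w = a • contractWedge φ u v := by
  have hφ : a * φ u + b * φ v + c * φ w = 0 := by simpa using congrArg φ h
  unfold contractWedge
  linear_combination (norm := module) (-φ v) • h + hφ • v

end ContractWedge

section Field

variable {K M : Type*} [Field K] [AddCommGroup M] [Module K M] (φ : M →ₗ[K] K)

theorem contractWedge_ne_zero {u v : M} (huv : LinearIndependent K ![u, v]) (hu : φ u ≠ 0) :
    contractWedge φ u v ≠ 0 := by
  intro h
  rw [contractWedge, sub_eq_add_neg, ← neg_smul] at h
  exact hu (neg_eq_zero.mp (LinearIndependent.pair_iff.mp huv _ _ h).2)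

theorem exists_add_add_eq_zero_of_not_linearIndependent {u v w : M}
    (huv : LinearIndependent K ![u, v]) (hvw : LinearIndependent K ![v, w])
    (huvw : ¬LinearIndependent K ![u, v, w]) :
    ∃ a b c : K, a ≠ 0 ∧ c ≠ 0 ∧ a • u + b • v + c • w = 0 := by
  obtain ⟨g, hg, i, hi⟩ := Fintype.not_linearIndependent_iff.mp huvw
  simp only [Fin.sum_univ_three, Matrix.cons_val_zero, Matrix.cons_val_one,
    Matrix.cons_val_two, Matrix.head_cons, Matrix.tail_cons] at hg
  have ha : g 0 ≠ 0 := by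
    intro ha
    rw [ha, zero_smul, zero_add] at hg
    obtain ⟨h1, h2⟩ := LinearIndependent.pair_iff.mp hvw _ _ hg
    fin_cases i <;> simp_all
  have hc : g 2 ≠ 0 := by
    intro hc
    rw [hc, zero_smul, add_zero] at hg
    exact ha (LinearIndependent.pair_iff.mp huv _ _ hg).1
  exact ⟨g 0, g 1, g 2, ha, hc, hg⟩

theorem exists_contractWedge_eq_smul {u v w : M}
    (huv : LinearIndependent K ![u, v]) (hvw : LinearIndependent K ![v, w])
    (huvw : ¬LinearIndependent K ![u, v, w]) :
    ∃ s : K, s ≠ 0 ∧ contractWedge φ v w = s • contractWedge φ u v := by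
  obtain ⟨a, b, c, ha, hc, h⟩ := exists_add_add_eq_zero_of_not_linearIndependent huv hvw huvw
  refine ⟨c⁻¹ * a, mul_ne_zero (inv_ne_zero hc) ha, ?_⟩
  rw [mul_smul, ← smul_contractWedge_eq_of_add_add_eq_zero φ h, inv_smul_smul₀ hc]

theorem exists_contractWedge_eq_smul_of_forall_not_linearIndependent (x : ℕ → M) (N : ℕ)
    (hind : ∀ i, N ≤ i → LinearIndependent K ![x i, x (i + 1)])
    (hdep : ∀ i, N ≤ i → ¬LinearIndependent K ![x i, x (i + 1), x (i + 2)]) :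
    ∀ i, N ≤ i → ∃ t : K, t ≠ 0 ∧
      contractWedge φ (x i) (x (i + 1)) = t • contractWedge φ (x N) (x (N + 1)) := by
  intro i hi
  induction i, hi using Nat.le_induction with
  | base => exact ⟨1, one_ne_zero, (one_smul K _).symm⟩
  | succ i hi ih =>
    obtain ⟨t, ht, hti⟩ := ih
    obtain ⟨s, hs, hsi⟩ :=
      exists_contractWedge_eq_smul φ (hind i hi) (hind (i + 1) (by omega)) (hdep i hi)
    exact ⟨s * t, mul_ne_zero hs ht, by rw [hsi, hti, mul_smul]⟩

end Field

theorem contractWedge_lcoeff_map {R S : Type*} [CommRing R] [CommRing S] (f : R →+* S) (k : ℕ)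
    (P Q : R[X]) :
    contractWedge (lcoeff S k) (P.map f) (Q.map f) = (contractWedge (lcoeff R k) P Q).map f := by
  simp [contractWedge, Polynomial.map_sub, smul_eq_C_mul, Polynomial.map_mul]

theorem degree_contractWedge_le {R : Type*} [CommRing R] (φ : R[X] →ₗ[R] R) {P Q : R[X]}
    {n : WithBot ℕ} (hP : P.degree ≤ n) (hQ : Q.degree ≤ n) :
    (contractWedge φ P Q).degree ≤ n :=
  (degree_sub_le _ _).trans
    (max_le ((degree_smul_le _ _).trans hP) ((degree_smul_le _ _).trans hQ))

theorem aeval_contractWedge_lcoeff (ξ : ℂ) (k : ℕ) (P Q : ℤ[X]) :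
    aeval ξ (contractWedge (lcoeff ℤ k) P Q) = Q.coeff k * aeval ξ P - P.coeff k * aeval ξ Q := by
  simp [contractWedge, smul_eq_C_mul]

theorem contractWedge_lcoeff_ne_zero {k : ℕ} {P Q : ℤ[X]}
    (hPQ : LinearIndependent ℚ ![P.map (Int.castRingHom ℚ), Q.map (Int.castRingHom ℚ)])
    (hk : P.coeff k ≠ 0) :
    contractWedge (lcoeff ℤ k) P Q ≠ 0 := by
  rw [← (map_injective _ (RingHom.injective_int (Int.castRingHom ℚ))).ne_iff,
    Polynomial.map_zero, ← contractWedge_lcoeff_map]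
  exact contractWedge_ne_zero _ hPQ (by simpa using hk)

theorem abs_coeff_le_htZ {P : ℤ[X]} (hP : P.degree ≤ 2) : ∀ k, |P.coeff k| ≤ htZ P
  | 0 => le_max_left _ _
  | 1 => (le_max_left _ _).trans (le_max_right _ _)
  | 2 => (le_max_right _ _).trans (le_max_right _ _)
  | k + 3 => by
    rw [coeff_eq_zero_of_degree_lt (hP.trans_lt (by exact_mod_cast (by omega : 2 < k + 3))),
      abs_zero]
    exact (abs_nonneg _).trans (le_max_left _ _)

theorem norm_aeval_contractWedge_le (ξ : ℂ) (k : ℕ) {P Q : ℤ[X]} (hP : P.degree ≤ 2)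
    (hQ : Q.degree ≤ 2) :
    ‖aeval ξ (contractWedge (lcoeff ℤ k) P Q)‖ ≤
      htZ Q * ‖aeval ξ P‖ + htZ P * ‖aeval ξ Q‖ := by
  have hcoeff : ∀ {R : ℤ[X]}, R.degree ≤ 2 → ‖(R.coeff k : ℂ)‖ ≤ htZ R := fun hR => by
    rw [Complex.norm_intCast]; exact_mod_cast abs_coeff_le_htZ hR k
  rw [aeval_contractWedge_lcoeff]
  refine (norm_sub_le _ _).trans (add_le_add ?_ ?_) <;> rw [norm_mul]
  · exact mul_le_mul_of_nonneg_right (hcoeff hQ) (norm_nonneg _)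
  · exact mul_le_mul_of_nonneg_right (hcoeff hP) (norm_nonneg _)

/-- Integrality: `t * B.coeff j = A.coeff j` is a nonzero integer, so `|t| * |B.coeff j| ≥ 1`. -/
theorem norm_aeval_le_of_map_eq_smul (ξ : ℂ) {A B : ℤ[X]} {t : ℚ} (ht : t ≠ 0)
    (h : A.map (Int.castRingHom ℚ) = t • B.map (Int.castRingHom ℚ)) {j : ℕ} (hj : B.coeff j ≠ 0) :
    ‖aeval ξ B‖ ≤ |(B.coeff j : ℝ)| * ‖aeval ξ A‖ := by
  have hcoeff : (A.coeff j : ℚ) = t * B.coeff j := by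
    simpa using congrArg (coeff · j) h
  have haeval : aeval ξ A = t * aeval ξ B := by
    have := congrArg (aeval ξ) h
    rwa [← algebraMap_int_eq, map_smul, aeval_map_algebraMap, aeval_map_algebraMap,
      Rat.smul_def] at this
  have hA : A.coeff j ≠ 0 := by
    intro hA; rw [hA, Int.cast_zero] at hcoeff
    exact mul_ne_zero ht (Int.cast_ne_zero.mpr hj) hcoeff.symm
  have hone : (1 : ℝ) ≤ |(t : ℝ)| * |(B.coeff j : ℝ)| := by
    rw [← abs_mul, show (t : ℝ) * B.coeff j = A.coeff j by exact_mod_cast hcoeff.symm]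
    exact_mod_cast Int.one_le_abs hA
  calc ‖aeval ξ B‖ ≤ |(t : ℝ)| * |(B.coeff j : ℝ)| * ‖aeval ξ B‖ :=
        le_mul_of_one_le_left (norm_nonneg _) hone
    _ = |(B.coeff j : ℝ)| * ‖aeval ξ A‖ := by
        rw [haeval, norm_mul, show ((t : ℂ)) = ((t : ℝ) : ℂ) by push_cast; rfl,
          Complex.norm_real, Real.norm_eq_abs]
        ring

theorem tendsto_norm_aeval_contractWedge (ξ : ℂ) (k : ℕ) (Xs : ℕ → ℕ) (Ps : ℕ → ℤ[X])
    (hmono : StrictMono Xs) (hdeg : ∀ i, (Ps i).degree ≤ 2) (hht : ∀ i, htZ (Ps i) = Xs i)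
    (hlim : Tendsto (fun i => (Xs (i + 1) : ℝ) * ‖aeval ξ (Ps i)‖) atTop (nhds 0)) :
    Tendsto (fun i => ‖aeval ξ (contractWedge (lcoeff ℤ k) (Ps i) (Ps (i + 1)))‖)
      atTop (nhds 0) := by
  have hsum : Tendsto (fun i => (Xs (i + 1) : ℝ) * ‖aeval ξ (Ps i)‖ +
      (Xs (i + 1 + 1) : ℝ) * ‖aeval ξ (Ps (i + 1))‖) atTop (nhds 0) := by
    simpa using hlim.add (hlim.comp (tendsto_add_atTop_nat 1))
  refine squeeze_zero (fun _ => norm_nonneg _) (fun i => ?_) hsum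
  refine (norm_aeval_contractWedge_le ξ k (hdeg i) (hdeg (i + 1))).trans (add_le_add ?_ ?_)
  · rw [hht, Int.cast_natCast]
  · rw [hht]
    gcongr
    exact_mod_cast (hmono.monotone (by omega : i ≤ i + 1 + 1))

theorem infinitely_many_independent_triples_general (ξ : ℂ)
    (hξ : ∀ P : Polynomial ℤ, P ≠ 0 → P.degree ≤ 2 → aeval ξ P ≠ 0)
    (Xs : ℕ → ℕ) (Ps : ℕ → Polynomial ℤ)
    (hmono : StrictMono Xs)
    (hdeg : ∀ i, (Ps i).degree ≤ 2)
    (hht : ∀ i, htZ (Ps i) = Xs i)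
    (hind : ∀ i, LinearIndependent ℚ
      ![(Ps i).map (Int.castRingHom ℚ), (Ps (i + 1)).map (Int.castRingHom ℚ)])
    (hlim : Tendsto (fun i => (Xs (i + 1) : ℝ) * ‖aeval ξ (Ps i)‖)
      atTop (nhds 0)) :
    ∀ N : ℕ, ∃ i ≥ N, LinearIndependent ℚ
      ![(Ps i).map (Int.castRingHom ℚ), (Ps (i + 1)).map (Int.castRingHom ℚ),
        (Ps (i + 2)).map (Int.castRingHom ℚ)] := by
  intro N
  by_contra! hdep
  have hPN : Ps N ≠ 0 := fun h => (hind N).ne_zero 0 (by simp [h])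
  obtain ⟨k, hk⟩ : ∃ k, (Ps N).coeff k ≠ 0 := ⟨_, leadingCoeff_ne_zero.mpr hPN⟩
  set E := contractWedge (lcoeff ℤ k) (Ps N) (Ps (N + 1))
  have hE : E ≠ 0 := contractWedge_lcoeff_ne_zero (hind N) hk
  obtain ⟨j, hj⟩ : ∃ j, E.coeff j ≠ 0 := ⟨_, leadingCoeff_ne_zero.mpr hE⟩
  have hbound : 0 < ‖aeval ξ E‖ / |(E.coeff j : ℝ)| :=
    div_pos (norm_pos_iff.mpr (hξ E hE (degree_contractWedge_le _ (hdeg N) (hdeg (N + 1)))))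
      (abs_pos.mpr (Int.cast_ne_zero.mpr hj))
  have hlower : ∀ i ≥ N, ‖aeval ξ E‖ / |(E.coeff j : ℝ)| ≤
      ‖aeval ξ (contractWedge (lcoeff ℤ k) (Ps i) (Ps (i + 1)))‖ := by
    intro i hi
    obtain ⟨t, ht, hti⟩ := exists_contractWedge_eq_smul_of_forall_not_linearIndependent
      (lcoeff ℚ k) (fun i => (Ps i).map (Int.castRingHom ℚ)) N (fun i _ => hind i) hdep i hi
    rw [contractWedge_lcoeff_map, contractWedge_lcoeff_map] at hti
    rw [div_le_iff₀' (abs_pos.mpr (Int.cast_ne_zero.mpr hj))]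
    exact norm_aeval_le_of_map_eq_smul ξ ht hti hj
  obtain ⟨i, hi, hlt⟩ := ((eventually_ge_atTop N).and
    ((tendsto_norm_aeval_contractWedge ξ k Xs Ps hmono hdeg hht hlim).eventually_lt_const
      hbound)).exists
  exact (hlower i hi).not_gt hlt

theorem infinitely_many_independent_triples (ξ : ℂ)
    (hξ : ∀ P : Polynomial ℤ, P ≠ 0 → P.degree ≤ 2 → aeval ξ P ≠ 0)
    (Xs : ℕ → ℕ) (Ps : ℕ → Polynomial ℤ)
    (hmono : StrictMono Xs) (hpos : ∀ i, 0 < Xs i)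
    (hne : ∀ i, Ps i ≠ 0) (hdeg : ∀ i, (Ps i).degree ≤ 2)
    (hht : ∀ i, htZ (Ps i) = Xs i)
    (hdec : ∀ i, ‖aeval ξ (Ps (i + 1))‖ < ‖aeval ξ (Ps i)‖)
    (hmin : ∀ i, ∀ P : Polynomial ℤ, P ≠ 0 → P.degree ≤ 2 → htZ P < Xs (i + 1) →
      ‖aeval ξ (Ps i)‖ ≤ ‖aeval ξ P‖)
    (hind : ∀ i, LinearIndependent ℚ
      ![(Ps i).map (Int.castRingHom ℚ), (Ps (i + 1)).map (Int.castRingHom ℚ)])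
    (hlim : Tendsto (fun i => (Xs (i + 1) : ℝ) * ‖aeval ξ (Ps i)‖)
      atTop (nhds 0)) :
    ∀ N : ℕ, ∃ i ≥ N, LinearIndependent ℚ
      ![(Ps i).map (Int.castRingHom ℚ), (Ps (i + 1)).map (Int.castRingHom ℚ),
        (Ps (i + 2)).map (Int.castRingHom ℚ)] :=
  infinitely_many_independent_triples_general ξ hξ Xs Ps hmono hdeg hht hind hlim
end

section
/- Let ξ ∈ C with [Q(ξ):Q] > 2, and suppose there is c > 0 such that for all sufficiently large X there is a nonzero P ∈ Z[T] of degree ≤ 2 with H(P) ≤ X and |P(ξ)| ≤ c X^{-γ²}. Let (X_i), (P_i) be the minimal sequences (H(P_i) = X_i, |P_i(ξ)| minimal for heights < X_{i+1}). Then for any c₁ > c and all sufficiently large indices i for which P_{i-1}, P_i, P_{i+1} are linearly independent over Q, one has X_i^γ ≤ 2 c₁ X_{i+1}. -/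
open Polynomial

/-!
Let `D` be the determinant of the coefficient matrix of `P_i, P_{i+1}, P_{i+2}`. It is a nonzero
integer, so `|D| ≥ 1`. Adding `ξ` times the second column and `ξ²` times the third to the first
replaces the first column by the values `P_j(ξ)`; expanding along it and bounding each `2 × 2` minor
by twice the product of two heights gives
`1 ≤ 2 (|P_i(ξ)| X_{i+1} X_{i+2} + |P_{i+1}(ξ)| X_i X_{i+2} + |P_{i+2}(ξ)| X_i X_{i+1})`.
Minimality of `P_j` against the polynomials of the approximation hypothesis gives
`|P_j(ξ)| ≤ c' X_{j+1}^{-γ²}` for any `c' > c` and large `j`. Since `γ² = γ + 1` this becomes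
`1 ≤ 2c' X_{i+1}^{-γ} X_{i+2} + 4c' X_{i+2}^{1-γ}`, and the last term tends to `0`.
-/

open Filter

theorem one_lt_gr : 1 < gr := Real.one_lt_goldenRatio

theorem gr_sq : gr ^ 2 = gr + 1 := Real.goldenRatio_sq

theorem abs_coeff_le_htZ_s10 (P : ℤ[X]) {k : ℕ} (hk : k ≤ 2) : |P.coeff k| ≤ htZ P := by
  interval_cases k <;> simp [htZ]

theorem abs_coeff_one_mul_coeff_two_sub_le (P Q : ℤ[X]) :
    |P.coeff 1 * Q.coeff 2 - P.coeff 2 * Q.coeff 1| ≤ 2 * (htZ P * htZ Q) := by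
  have hP₁ := abs_coeff_le_htZ_s10 P (k := 1) (by norm_num)
  have hP₂ := abs_coeff_le_htZ_s10 P (k := 2) (by norm_num)
  have hQ₁ := abs_coeff_le_htZ_s10 Q (k := 1) (by norm_num)
  have hQ₂ := abs_coeff_le_htZ_s10 Q (k := 2) (by norm_num)
  calc _ ≤ |P.coeff 1| * |Q.coeff 2| + |P.coeff 2| * |Q.coeff 1| := by
        simpa only [abs_mul] using abs_sub (P.coeff 1 * Q.coeff 2) (P.coeff 2 * Q.coeff 1)
    _ ≤ 2 * (htZ P * htZ Q) := by
        nlinarith [abs_nonneg (P.coeff 1), abs_nonneg (P.coeff 2), abs_nonneg (Q.coeff 1),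
          abs_nonneg (Q.coeff 2)]

theorem aeval_eq_of_degree_le_two {A : Type*} [CommRing A] (x : A) {P : ℤ[X]}
    (hP : P.degree ≤ 2) : aeval x P = P.coeff 0 + P.coeff 1 * x + P.coeff 2 * x ^ 2 := by
  rw [aeval_eq_sum_range' (n := 3) (Nat.lt_succ_of_le (natDegree_le_of_degree_le hP))]
  simp [Finset.sum_range_succ]

theorem det_coeff_ne_zero {K : Type*} [Field K] {n : ℕ} (p : Fin n → K[X])
    (hp : ∀ j, (p j).degree < n) (hli : LinearIndependent K p) :
    (Matrix.of fun j k : Fin n => (p j).coeff k).det ≠ 0 := by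
  let q : Fin n → degreeLT K n := fun j => ⟨p j, mem_degreeLT.2 (hp j)⟩
  have hq : LinearIndependent K q := LinearIndependent.of_comp (degreeLT K n).subtype hli
  have hrows := hq.map' _ (degreeLTEquiv K n).ker
  exact ((Matrix.isUnit_iff_isUnit_det _).1
    (Matrix.linearIndependent_rows_iff_isUnit.1 hrows)).ne_zero

theorem det_coeff_eq_aeval {A : Type*} [CommRing A] (x : A) {P₀ P₁ P₂ : ℤ[X]}
    (h₀ : P₀.degree ≤ 2) (h₁ : P₁.degree ≤ 2) (h₂ : P₂.degree ≤ 2) :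
    (((Matrix.of fun j k : Fin 3 => (![P₀, P₁, P₂] j).coeff k).det : ℤ) : A) =
      aeval x P₀ * ↑(P₁.coeff 1 * P₂.coeff 2 - P₁.coeff 2 * P₂.coeff 1)
      - aeval x P₁ * ↑(P₀.coeff 1 * P₂.coeff 2 - P₀.coeff 2 * P₂.coeff 1)
      + aeval x P₂ * ↑(P₀.coeff 1 * P₁.coeff 2 - P₀.coeff 2 * P₁.coeff 1) := by
  rw [aeval_eq_of_degree_le_two x h₀, aeval_eq_of_degree_le_two x h₁,
    aeval_eq_of_degree_le_two x h₂, Matrix.det_fin_three]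
  simp only [Fin.isValue, Matrix.of_apply, Matrix.cons_val_zero, Fin.coe_ofNat_eq_mod,
    Nat.zero_mod, Matrix.cons_val_one, Nat.one_mod, Matrix.cons_val, Nat.mod_succ, Int.cast_sub,
    Int.cast_add, Int.cast_mul]
  ring

theorem one_le_sum_norm_aeval_mul_htZ (ξ : ℂ) {P₀ P₁ P₂ : ℤ[X]}
    (h₀ : P₀.degree ≤ 2) (h₁ : P₁.degree ≤ 2) (h₂ : P₂.degree ≤ 2)
    (hli : LinearIndependent ℚ
      ![P₀.map (Int.castRingHom ℚ), P₁.map (Int.castRingHom ℚ), P₂.map (Int.castRingHom ℚ)]) :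
    1 ≤ 2 * ‖aeval ξ P₀‖ * htZ P₁ * htZ P₂ + 2 * ‖aeval ξ P₁‖ * htZ P₀ * htZ P₂
      + 2 * ‖aeval ξ P₂‖ * htZ P₀ * htZ P₁ := by
  set D := (Matrix.of fun j k : Fin 3 => (![P₀, P₁, P₂] j).coeff k).det
  have hD : D ≠ 0 := by
    have hdeg : ∀ j, (![P₀.map (Int.castRingHom ℚ), P₁.map (Int.castRingHom ℚ),
        P₂.map (Int.castRingHom ℚ)] j).degree < (3 : ℕ) := by
      intro j
      fin_cases j <;>
        refine degree_map_le.trans_lt (lt_of_le_of_lt ?_ (by norm_num : (2 : WithBot ℕ) < 3)) <;>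
        assumption
    have hDℚ := det_coeff_ne_zero _ hdeg hli
    contrapose! hDℚ
    rw [← (Int.castRingHom ℚ).map_zero, ← hDℚ, RingHom.map_det]
    congr 1
    ext j k
    fin_cases j <;> simp
  have hminor := fun P Q => (Int.cast_le (R := ℝ)).2 (abs_coeff_one_mul_coeff_two_sub_le P Q)
  push_cast at hminor
  calc (1 : ℝ) ≤ ‖(D : ℂ)‖ := by
        rw [Complex.norm_intCast]; exact_mod_cast Int.one_le_abs hD
    _ ≤ _ := by
      rw [det_coeff_eq_aeval ξ h₀ h₁ h₂]
      refine (norm_add_le _ _).trans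
        (add_le_add ((norm_sub_le _ _).trans (add_le_add ?_ ?_)) ?_) <;>
      · rw [norm_mul, Complex.norm_intCast]
        push_cast
        nlinarith [hminor P₀ P₁, hminor P₀ P₂, hminor P₁ P₂, norm_nonneg (aeval ξ P₀),
          norm_nonneg (aeval ξ P₁), norm_nonneg (aeval ξ P₂)]

theorem eventually_mul_sub_one_rpow_le {c c' : ℝ} (hcc' : c < c') (s : ℝ) :
    ∀ᶠ x : ℝ in atTop, c * (x - 1) ^ s ≤ c' * x ^ s := by
  have hlim : Tendsto (fun x : ℝ => c * (1 - x⁻¹) ^ s) atTop (nhds c) := by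
    have h := ((tendsto_const_nhds (x := (1 : ℝ))).sub tendsto_inv_atTop_zero).rpow_const
      (p := s) (Or.inl (by norm_num))
    simpa using h.const_mul c
  filter_upwards [hlim.eventually_lt_const hcc', eventually_gt_atTop 1] with x hx hx1
  have hsplit : (x - 1) ^ s = (1 - x⁻¹) ^ s * x ^ s := by
    rw [← Real.mul_rpow (sub_nonneg.2 (inv_le_one_of_one_le₀ hx1.le)) (by linarith)]
    congr 1
    field_simp
  rw [hsplit, ← mul_assoc]
  exact mul_le_mul_of_nonneg_right hx.le (Real.rpow_nonneg (by linarith) _)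

theorem eventually_norm_aeval_le {ξ : ℂ} {c c' s : ℝ} (hcc' : c < c') {Xs : ℕ → ℕ}
    {Ps : ℕ → ℤ[X]} (hXs : Tendsto Xs atTop atTop)
    (happrox : ∃ X₀ : ℝ, ∀ Y : ℝ, X₀ ≤ Y →
      ∃ P : ℤ[X], P ≠ 0 ∧ P.degree ≤ 2 ∧ (htZ P : ℝ) ≤ Y ∧ ‖aeval ξ P‖ ≤ c * Y ^ s)
    (hmin : ∀ i, ∀ P : ℤ[X], P ≠ 0 → P.degree ≤ 2 → htZ P < Xs (i + 1) →
      ‖aeval ξ (Ps i)‖ ≤ ‖aeval ξ P‖) :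
    ∀ᶠ j in atTop, ‖aeval ξ (Ps j)‖ ≤ c' * (Xs (j + 1) : ℝ) ^ s := by
  obtain ⟨X₀, hX₀⟩ := happrox
  have hX : Tendsto (fun j => (Xs (j + 1) : ℝ)) atTop atTop :=
    tendsto_natCast_atTop_atTop.comp (hXs.comp (tendsto_add_atTop_nat 1))
  filter_upwards [hX.eventually
    ((eventually_mul_sub_one_rpow_le hcc' s).and (eventually_ge_atTop (X₀ + 1)))]
    with j ⟨hj, hjX₀⟩
  -- heights are integers, so a polynomial of height `≤ Xs (j + 1) - 1` competes with `Ps j`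
  obtain ⟨P, hP, hPdeg, hPht, hPval⟩ := hX₀ ((Xs (j + 1) : ℝ) - 1) (by linarith)
  have hPlt : htZ P < Xs (j + 1) := by
    have : (htZ P : ℝ) < ((Xs (j + 1) : ℤ) : ℝ) := by push_cast; linarith
    exact_mod_cast this
  exact (hmin j P hP hPdeg hPlt).trans (hPval.trans hj)

theorem one_le_of_det_bound {t c' x₀ x₁ x₂ a b d : ℝ} (hc' : 0 ≤ c') (hx₀ : 0 ≤ x₀)
    (h₀₁ : x₀ ≤ x₁) (h₁₂ : x₁ ≤ x₂) (hx₁ : 0 < x₁)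
    (ha : a ≤ c' * x₁ ^ (-t)) (hb : b ≤ c' * x₂ ^ (-t)) (hd : d ≤ c' * x₂ ^ (-t))
    (h : 1 ≤ 2 * a * x₁ * x₂ + 2 * b * x₀ * x₂ + 2 * d * x₀ * x₁) :
    1 ≤ 2 * c' * x₁ ^ (1 - t) * x₂ + 4 * c' * x₂ ^ (2 - t) := by
  have hx₂ : 0 < x₂ := hx₁.trans_le h₁₂
  have e₁ : x₁ ^ (1 - t) = x₁ ^ (-t) * x₁ := by
    rw [← Real.rpow_add_one hx₁.ne']; ring_nf
  have e₂ : x₂ ^ (2 - t) = x₂ ^ (-t) * x₂ ^ 2 := by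
    rw [← Real.rpow_natCast, ← Real.rpow_add hx₂]; ring_nf
  have hx : x₀ * x₂ + x₀ * x₁ ≤ 2 * x₂ ^ 2 := by nlinarith
  calc 1 ≤ 2 * a * x₁ * x₂ + 2 * b * x₀ * x₂ + 2 * d * x₀ * x₁ := h
    _ ≤ 2 * (c' * x₁ ^ (-t)) * x₁ * x₂ + 2 * (c' * x₂ ^ (-t)) * (x₀ * x₂ + x₀ * x₁) := by
      nlinarith [mul_nonneg hx₁.le hx₂.le, mul_nonneg hx₀ hx₂.le, mul_nonneg hx₀ hx₁.le]
    _ ≤ 2 * (c' * x₁ ^ (-t)) * x₁ * x₂ + 2 * (c' * x₂ ^ (-t)) * (2 * x₂ ^ 2) := by gcongr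
    _ = 2 * c' * x₁ ^ (1 - t) * x₂ + 4 * c' * x₂ ^ (2 - t) := by rw [e₁, e₂]; ring

theorem rpow_le_of_one_le_mul_rpow_neg_add {a c' c₁ x y ε : ℝ} (hc' : 0 < c')
    (hc'c₁ : c' < c₁) (hx : 0 < x) (h : 1 ≤ 2 * c' * x ^ (-a) * y + ε)
    (hε : ε ≤ 1 - c' / c₁) : x ^ a ≤ 2 * c₁ * y := by
  have hxa : 0 < x ^ a := Real.rpow_pos_of_pos hx a
  have h' : c' / c₁ ≤ 2 * c' * y / x ^ a := by
    rw [Real.rpow_neg hx.le] at h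
    rw [div_eq_mul_inv _ (x ^ a)]
    linarith
  rw [div_le_div_iff₀ (hc'.trans hc'c₁) hxa] at h'
  nlinarith

theorem height_growth_from_independence_general (ξ : ℂ)
    (c : ℝ) (hc : 0 < c)
    (happrox : ∃ X₀ : ℝ, ∀ Y : ℝ, X₀ ≤ Y →
      ∃ P : Polynomial ℤ, P ≠ 0 ∧ P.degree ≤ 2 ∧ (htZ P : ℝ) ≤ Y ∧
        ‖aeval ξ P‖ ≤ c * Y ^ (-(gr ^ 2)))
    (Xs : ℕ → ℕ) (Ps : ℕ → Polynomial ℤ)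
    (hmono : StrictMono Xs) (hdeg : ∀ i, (Ps i).degree ≤ 2)
    (hht : ∀ i, htZ (Ps i) = Xs i)
    (hmin : ∀ i, ∀ P : Polynomial ℤ, P ≠ 0 → P.degree ≤ 2 → htZ P < Xs (i + 1) →
      ‖aeval ξ (Ps i)‖ ≤ ‖aeval ξ P‖) :
    ∀ c₁ : ℝ, c < c₁ → ∃ N : ℕ, ∀ i ≥ N,
      LinearIndependent ℚ
        ![(Ps i).map (Int.castRingHom ℚ), (Ps (i + 1)).map (Int.castRingHom ℚ),
          (Ps (i + 2)).map (Int.castRingHom ℚ)] →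
      (Xs (i + 1) : ℝ) ^ gr ≤ 2 * c₁ * (Xs (i + 2) : ℝ) := by
  intro c₁ hcc₁
  obtain ⟨c', hcc', hc'c₁⟩ := exists_between hcc₁
  have hc' : 0 < c' := hc.trans hcc'
  have hval := eventually_norm_aeval_le hcc' hmono.tendsto_atTop happrox hmin
  have hsmall : ∀ᶠ j in atTop, 4 * c' * (Xs j : ℝ) ^ (1 - gr) ≤ 1 - c' / c₁ := by
    have hlim := (tendsto_rpow_neg_atTop (sub_pos.2 one_lt_gr)).const_mul (4 * c')
    rw [mul_zero, neg_sub] at hlim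
    have hε : 0 < 1 - c' / c₁ := sub_pos.2 ((div_lt_one (hc.trans hcc₁)).2 hc'c₁)
    exact (tendsto_natCast_atTop_atTop.comp hmono.tendsto_atTop).eventually
      ((hlim.eventually_lt_const hε).mono fun _ => le_of_lt)
  obtain ⟨N, hN⟩ := eventually_atTop.1 (hval.and hsmall)
  refine ⟨N, fun i hi hli => ?_⟩
  have hXs : ∀ j, (Xs j : ℝ) ≤ Xs (j + 1) := fun j => by exact_mod_cast (hmono j.lt_succ_self).le
  have hx₁ : (0 : ℝ) < Xs (i + 1) := by
    exact_mod_cast (Nat.zero_le _).trans_lt (hmono i.lt_succ_self)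
  have hval₂ : ‖aeval ξ (Ps (i + 2))‖ ≤ c' * (Xs (i + 2) : ℝ) ^ (-(gr ^ 2)) :=
    (hN (i + 2) (by omega)).1.trans (mul_le_mul_of_nonneg_left (Real.rpow_le_rpow_of_nonpos
      (hx₁.trans_le (hXs _)) (hXs _) (neg_nonpos.2 (sq_nonneg gr))) hc'.le)
  have hdet := one_le_sum_norm_aeval_mul_htZ ξ (hdeg i) (hdeg (i + 1)) (hdeg (i + 2)) hli
  simp only [hht, Int.cast_natCast] at hdet
  have hbound := one_le_of_det_bound hc'.le (Nat.cast_nonneg _) (hXs i) (hXs (i + 1)) hx₁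
    (hN i hi).1 (hN (i + 1) (by omega)).1 hval₂ hdet
  rw [gr_sq, show 1 - (gr + 1) = -gr by ring, show 2 - (gr + 1) = 1 - gr by ring] at hbound
  exact rpow_le_of_one_le_mul_rpow_neg_add hc' hc'c₁ hx₁ hbound (hN (i + 2) (by omega)).2

theorem height_growth_from_independence (ξ : ℂ)
    (hξ : ∀ P : Polynomial ℤ, P ≠ 0 → P.degree ≤ 2 → aeval ξ P ≠ 0)
    (c : ℝ) (hc : 0 < c)
    (happrox : ∃ X₀ : ℝ, ∀ Y : ℝ, X₀ ≤ Y →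
      ∃ P : Polynomial ℤ, P ≠ 0 ∧ P.degree ≤ 2 ∧ (htZ P : ℝ) ≤ Y ∧
        ‖aeval ξ P‖ ≤ c * Y ^ (-(gr ^ 2)))
    (Xs : ℕ → ℕ) (Ps : ℕ → Polynomial ℤ)
    (hmono : StrictMono Xs) (hpos : ∀ i, 0 < Xs i)
    (hne : ∀ i, Ps i ≠ 0) (hdeg : ∀ i, (Ps i).degree ≤ 2)
    (hht : ∀ i, htZ (Ps i) = Xs i)
    (hdec : ∀ i, ‖aeval ξ (Ps (i + 1))‖ < ‖aeval ξ (Ps i)‖)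
    (hmin : ∀ i, ∀ P : Polynomial ℤ, P ≠ 0 → P.degree ≤ 2 → htZ P < Xs (i + 1) →
      ‖aeval ξ (Ps i)‖ ≤ ‖aeval ξ P‖) :
    ∀ c₁ : ℝ, c < c₁ → ∃ N : ℕ, ∀ i ≥ N,
      LinearIndependent ℚ
        ![(Ps i).map (Int.castRingHom ℚ), (Ps (i + 1)).map (Int.castRingHom ℚ),
          (Ps (i + 2)).map (Int.castRingHom ℚ)] →
      (Xs (i + 1) : ℝ) ^ gr ≤ 2 * c₁ * (Xs (i + 2) : ℝ) :=
  height_growth_from_independence_general ξ c hc happrox Xs Ps hmono hdeg hht hmin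
end

section
/- Let V be a 2-dimensional Q-vector subspace of the space of polynomials of degree ≤ 2 over Q, with basis {P, Q} of the lattice V ∩ Z[T]^{≤2}, and let ξ ∈ C with Q(ξ) ≠ 0. Suppose (P_i)_{i≥i₀} is a sequence of polynomials in V ∩ Z[T] with P_i = a_i P + b_i Q, where |a_i|, |b_i| ≤ c·H(P_i) for a constant c > 0, and P_i, P_{i+1} are linearly independent over Q for each i. Then for each i, 1 ≤ (2c/|Q(ξ)|) · H(P_{i+1}) · max(|P_i(ξ)|, |P_{i+1}(ξ)|·H(P_i)/H(P_{i+1})); in particular if |P_{i+1}(ξ)| ≤ |P_i(ξ)| and H(P_i) ≤ H(P_{i+1}), then 1 ≤ (2c/|Q(ξ)|) H(P_{i+1}) |P_i(ξ)|. -/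
/-!
Eliminating `P` between `Pᵢ = aᵢ P + bᵢ Q` and `Pᵢ₊₁ = aᵢ₊₁ P + bᵢ₊₁ Q` gives
`aᵢ₊₁ Pᵢ - aᵢ Pᵢ₊₁ = (aᵢ₊₁ bᵢ - aᵢ bᵢ₊₁) Q`, and the integer `aᵢ bᵢ₊₁ - aᵢ₊₁ bᵢ` is nonzero because
`Pᵢ, Pᵢ₊₁` are independent. Evaluating at `ξ`, the triangle inequality gives
`|Q(ξ)| ≤ |aᵢ₊₁| |Pᵢ(ξ)| + |aᵢ| |Pᵢ₊₁(ξ)| ≤ c H(Pᵢ₊₁) |Pᵢ(ξ)| + c H(Pᵢ) |Pᵢ₊₁(ξ)|`, and each summand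
is at most `c H(Pᵢ₊₁)` times the maximum in the statement.
-/

open Polynomial

lemma one_le_HZ2 {R : ℤ[X]} (h0 : R ≠ 0) (hdeg : R.degree ≤ 2) : 1 ≤ HZ2 R := by
  have hlead : (1 : ℝ) ≤ |(R.coeff R.natDegree : ℝ)| := by
    exact_mod_cast Int.one_le_abs (leadingCoeff_ne_zero.mpr h0)
  have hnat : R.natDegree ≤ 2 := natDegree_le_iff_degree_le.mpr hdeg
  interval_cases h : R.natDegree
  all_goals unfold HZ2; simp only [le_max_iff]; tauto

lemma sub_mul_ne_zero_of_linearIndependent_pair {R M : Type*} [CommRing R] [Nontrivial R]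
    [AddCommGroup M] [Module R M] {P Q : M} {a b a' b' : R}
    (h : LinearIndependent R ![a • P + b • Q, a' • P + b' • Q]) : a * b' - a' * b ≠ 0 := by
  intro hdet
  have hQ := LinearIndependent.pair_iff.mp h a' (-a) (by
    linear_combination (norm := module) (-hdet) • Q)
  have hP := LinearIndependent.pair_iff.mp h b' (-b) (by
    linear_combination (norm := module) hdet • P)
  refine h.ne_zero 0 ?_
  simp [neg_eq_zero.mp hQ.2, neg_eq_zero.mp hP.2]

lemma abs_sub_mul_mul_norm_le {E : Type*} [SeminormedAddCommGroup E] [NormedSpace ℝ E]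
    (P Q : E) (a b a' b' : ℤ) :
    |((a * b' - a' * b : ℤ) : ℝ)| * ‖Q‖ ≤
      |(a' : ℝ)| * ‖a • P + b • Q‖ + |(a : ℝ)| * ‖a' • P + b' • Q‖ := by
  have key : (a * b' - a' * b) • Q = a • (a' • P + b' • Q) - a' • (a • P + b • Q) := by module
  calc |((a * b' - a' * b : ℤ) : ℝ)| * ‖Q‖ = ‖(a * b' - a' * b) • Q‖ := by
        rw [norm_zsmul ℝ, Real.norm_eq_abs]
    _ = ‖a • (a' • P + b' • Q) - a' • (a • P + b • Q)‖ := by rw [key]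
    _ ≤ _ := by
        grw [norm_sub_le, norm_zsmul ℝ, norm_zsmul ℝ, Real.norm_eq_abs, Real.norm_eq_abs]
        linarith

lemma linearIndependent_of_map_intCast {ι : Type*} {v : ι → ℤ[X]}
    (h : LinearIndependent ℚ fun j => (v j).map (Int.castRingHom ℚ)) : LinearIndependent ℤ v :=
  (h.restrict_scalars' ℤ).of_comp (mapRingHom (Int.castRingHom ℚ)).toAddMonoidHom.toIntLinearMap

lemma one_le_two_mul_div_mul_max {q c H₀ H₁ A B : ℝ} (hq : 0 < q) (hc : 0 ≤ c) (hH₁ : 0 < H₁)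
    (h : q ≤ c * H₁ * A + c * H₀ * B) : 1 ≤ (2 * c / q) * H₁ * max A (B * H₀ / H₁) := by
  set M := max A (B * H₀ / H₁)
  have hcH₁ : 0 ≤ c * H₁ := by positivity
  have hA : c * H₁ * A ≤ c * H₁ * M := mul_le_mul_of_nonneg_left (le_max_left _ _) hcH₁
  have hB : c * H₀ * B ≤ c * H₁ * M := by
    calc c * H₀ * B = c * H₁ * (B * H₀ / H₁) := by field_simp
      _ ≤ c * H₁ * M := mul_le_mul_of_nonneg_left (le_max_right _ _) hcH₁
  rw [show 2 * c / q * H₁ * M = 2 * c * H₁ * M / q by ring, one_le_div hq]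
  linarith

theorem dependent_sequence_lower_bound_general (ξ : ℂ) (P Q : Polynomial ℤ)
    (hPdeg : P.degree ≤ 2) (hQdeg : Q.degree ≤ 2)
    (hQξ : aeval ξ Q ≠ 0) (c : ℝ) (hc : 0 < c)
    (Ps : ℕ → Polynomial ℤ) (a b : ℕ → ℤ)
    (hPs : ∀ i, Ps i = a i • P + b i • Q)
    (hne : ∀ i, Ps i ≠ 0)
    (ha : ∀ i, (|a i| : ℝ) ≤ c * HZ2 (Ps i))
    (hind : ∀ i, LinearIndependent ℚ
      ![(Ps i).map (Int.castRingHom ℚ), (Ps (i + 1)).map (Int.castRingHom ℚ)]) :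
    ∀ i : ℕ,
      (1 ≤ (2 * c / ‖aeval ξ Q‖) * HZ2 (Ps (i + 1)) *
        max (‖aeval ξ (Ps i)‖)
          (‖aeval ξ (Ps (i + 1))‖ * HZ2 (Ps i) / HZ2 (Ps (i + 1)))) ∧
      (‖aeval ξ (Ps (i + 1))‖ ≤ ‖aeval ξ (Ps i)‖ →
        HZ2 (Ps i) ≤ HZ2 (Ps (i + 1)) →
        1 ≤ (2 * c / ‖aeval ξ Q‖) * HZ2 (Ps (i + 1)) *
          ‖aeval ξ (Ps i)‖) := by
  intro i
  have hdeg (j : ℕ) : (Ps j).degree ≤ 2 := by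
    rw [hPs j, ← mem_degreeLE]
    exact add_mem (zsmul_mem (mem_degreeLE.mpr hPdeg) _) (zsmul_mem (mem_degreeLE.mpr hQdeg) _)
  have hH (j : ℕ) : 1 ≤ HZ2 (Ps j) := one_le_HZ2 (hne j) (hdeg j)
  have hindZ : LinearIndependent ℤ ![Ps i, Ps (i + 1)] := by
    refine linearIndependent_of_map_intCast ?_
    convert hind i using 1
    ext j : 1
    fin_cases j <;> rfl
  rw [hPs i, hPs (i + 1)] at hindZ
  have hdet := sub_mul_ne_zero_of_linearIndependent_pair hindZ
  have hQle : ‖aeval ξ Q‖ ≤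
      |(a (i + 1) : ℝ)| * ‖aeval ξ (Ps i)‖ + |(a i : ℝ)| * ‖aeval ξ (Ps (i + 1))‖ := by
    have h := abs_sub_mul_mul_norm_le (aeval ξ P) (aeval ξ Q) (a i) (b i) (a (i + 1)) (b (i + 1))
    have h1 : (1 : ℝ) ≤ |((a i * b (i + 1) - a (i + 1) * b i : ℤ) : ℝ)| := by
      exact_mod_cast Int.one_le_abs hdet
    calc ‖aeval ξ Q‖ ≤ |((a i * b (i + 1) - a (i + 1) * b i : ℤ) : ℝ)| * ‖aeval ξ Q‖ :=
          le_mul_of_one_le_left (norm_nonneg _) h1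
      _ ≤ _ := by simpa only [hPs, map_add, map_zsmul] using h
  grw [ha i, ha (i + 1)] at hQle
  have hmain := one_le_two_mul_div_mul_max (norm_pos_iff.mpr hQξ) hc.le
    (zero_lt_one.trans_le (hH (i + 1))) hQle
  refine ⟨hmain, fun hBA hH₀₁ => ?_⟩
  rwa [max_eq_left (div_le_of_le_mul₀ (zero_le_one.trans (hH _)) (norm_nonneg _)
    (mul_le_mul hBA hH₀₁ (zero_le_one.trans (hH _)) (norm_nonneg _)))] at hmain

theorem dependent_sequence_lower_bound (ξ : ℂ) (P Q : Polynomial ℤ)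
    (hPdeg : P.degree ≤ 2) (hQdeg : Q.degree ≤ 2)
    (hQξ : aeval ξ Q ≠ 0) (c : ℝ) (hc : 0 < c)
    (Ps : ℕ → Polynomial ℤ) (a b : ℕ → ℤ)
    (hPs : ∀ i, Ps i = a i • P + b i • Q)
    (hne : ∀ i, Ps i ≠ 0)
    (ha : ∀ i, (|a i| : ℝ) ≤ c * HZ2 (Ps i))
    (hb : ∀ i, (|b i| : ℝ) ≤ c * HZ2 (Ps i))
    (hind : ∀ i, LinearIndependent ℚ
      ![(Ps i).map (Int.castRingHom ℚ), (Ps (i + 1)).map (Int.castRingHom ℚ)]) :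
    ∀ i : ℕ,
      (1 ≤ (2 * c / ‖aeval ξ Q‖) * HZ2 (Ps (i + 1)) *
        max (‖aeval ξ (Ps i)‖)
          (‖aeval ξ (Ps (i + 1))‖ * HZ2 (Ps i) / HZ2 (Ps (i + 1)))) ∧
      (‖aeval ξ (Ps (i + 1))‖ ≤ ‖aeval ξ (Ps i)‖ →
        HZ2 (Ps i) ≤ HZ2 (Ps (i + 1)) →
        1 ≤ (2 * c / ‖aeval ξ Q‖) * HZ2 (Ps (i + 1)) *
          ‖aeval ξ (Ps i)‖) :=
  dependent_sequence_lower_bound_general ξ P Q hPdeg hQdeg hQξ c hc Ps a b hPs hne ha hind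
end
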